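/- Let n ≥ 3 and let f : 𝒜 → ℝ_{>0} be a function such that log⁺ ∘ f has a lower Fibonacci bound on 𝒜, i.e. there exist constants K > 0 and C > 0 such that log⁺ f(γ) ≥ K⁻¹·F(γ) − C for all γ ∈ 𝒜. Then for every t > 0 the infinite sum ∑_{γ∈𝒜} f(γ)^{−t} converges. -/

import Mathlib

open scoped BigOperators

noncomputable section

namespace MarkoffHurwitz

/-- The Markoff–Hurwitz polynomial `H(x) = x₁² + ⋯ + xₙ² − x₁⋯xₙ`. -/
def MH (n : ℕ) (x : Fin n → ℂ) : ℂ := (∑ i, x i ^ 2) - ∏ i, x i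

/-- The involution `bᵢ` replacing `xᵢ` by `(∏_{j≠i} x_j) − xᵢ`. -/
def bmap (n : ℕ) (i : Fin n) (x : Fin n → ℂ) : Fin n → ℂ :=
  Function.update x i ((∏ j ∈ Finset.univ.erase i, x j) - x i)

lemma bmap_apply_ne (n : ℕ) (i : Fin n) (x : Fin n → ℂ) {j : Fin n} (h : j ≠ i) :
    bmap n i x j = x j := Function.update_of_ne h _ _

lemma bmap_apply_same (n : ℕ) (i : Fin n) (x : Fin n → ℂ) :
    bmap n i x i = (∏ j ∈ Finset.univ.erase i, x j) - x i := Function.update_self _ _ _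

lemma prod_erase_bmap (n : ℕ) (i : Fin n) (x : Fin n → ℂ) :
    ∏ j ∈ Finset.univ.erase i, bmap n i x j = ∏ j ∈ Finset.univ.erase i, x j :=
  Finset.prod_congr rfl fun j hj => bmap_apply_ne n i x (Finset.ne_of_mem_erase hj)

lemma bmap_involutive (n : ℕ) (i : Fin n) : Function.Involutive (bmap n i) := by
  intro x; funext j
  rcases eq_or_ne j i with rfl | h
  · rw [bmap_apply_same, prod_erase_bmap, bmap_apply_same]; ring
  · rw [bmap_apply_ne n i _ h, bmap_apply_ne n i x h]

/-- The relators `bᵢ²` of the Coxeter presentation. -/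
def MHrels (n : ℕ) : Set (FreeGroup (Fin n)) :=
  Set.range fun i : Fin n => FreeGroup.of i * FreeGroup.of i

/-- The group `Γₙ = ⟨b₁,…,bₙ ∣ bᵢ² = 1⟩`, free product of `n` copies of `ℤ/2`. -/
abbrev Gam (n : ℕ) := PresentedGroup (MHrels n)

/-- The generator `bᵢ` as an element of `Γₙ`. -/
def gen {n : ℕ} (i : Fin n) : Gam n := PresentedGroup.of i

lemma gen_mul_self {n : ℕ} (i : Fin n) : gen i * gen i = 1 := by
  have h : PresentedGroup.mk (MHrels n) (FreeGroup.of i * FreeGroup.of i) = 1 := by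
    have : (FreeGroup.of i * FreeGroup.of i) ∈ Subgroup.normalClosure (MHrels n) :=
      Subgroup.subset_normalClosure ⟨i, rfl⟩
    exact (QuotientGroup.eq_one_iff _).2 this
  simpa [gen, PresentedGroup.of, map_mul] using h

lemma gen_inv {n : ℕ} (i : Fin n) : (gen i)⁻¹ = gen i :=
  inv_eq_of_mul_eq_one_right (gen_mul_self i)

/-- `bᵢ` as a permutation of `ℂⁿ`. -/
def bperm (n : ℕ) (i : Fin n) : Equiv.Perm (Fin n → ℂ) := (bmap_involutive n i).toPerm

/-- The action of `Γₙ` on `ℂⁿ` by the involutions `bᵢ`. -/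
def act (n : ℕ) : Gam n →* Equiv.Perm (Fin n → ℂ) :=
  PresentedGroup.toGroup (f := fun i => bperm n i) (by
    rintro r ⟨i, rfl⟩
    rw [map_mul, FreeGroup.lift_apply_of]
    refine Equiv.ext fun x => ?_
    simpa [bperm, Equiv.Perm.mul_apply] using bmap_involutive n i x)

lemma act_gen (n : ℕ) (i : Fin n) : act n (gen i) = bperm n i :=
  PresentedGroup.toGroup.of _

/-- The subgroup `⟨bᵢ, b_j⟩` associated to an unordered pair `{i,j}`. -/
def pairSub {n : ℕ} : Sym2 (Fin n) → Subgroup (Gam n) :=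
  Sym2.lift ⟨fun i j => Subgroup.closure {gen i, gen j}, fun i j => by
    show Subgroup.closure {gen i, gen j} = Subgroup.closure {gen j, gen i}
    rw [Set.pair_comm]⟩

lemma pairSub_mk {n : ℕ} (i j : Fin n) :
    pairSub s(i, j) = Subgroup.closure {gen i, gen j} := rfl

/-- An alternating geodesic in the Cayley tree of `Γₙ`: an unordered pair `{i,j}`
of distinct colors together with a coset `g⟨bᵢ,b_j⟩`. -/
structure AltGeo (n : ℕ) where
  pair : Sym2 (Fin n)
  nd : ¬ pair.IsDiag
  coset : Gam n ⧸ pairSub pair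

/-- Coordinates outside of a pair `{i,j}`. -/
def offPair {n : ℕ} (s : Sym2 (Fin n)) : Finset (Fin n) :=
  Finset.univ.filter fun k => ¬ k ∈ s

/-- Key invariance: the coordinates off the pair do not change when moving along the coset. -/
lemma coords_eq {n : ℕ} (a : Fin n → ℂ) (s : Sym2 (Fin n)) {t : Gam n}
    (ht : t ∈ pairSub s) (g : Gam n) {k : Fin n} (hk : ¬ k ∈ s) :
    act n (g * t)⁻¹ a k = act n g⁻¹ a k := by
  induction s using Sym2.ind with
  | _ i j =>
    rw [pairSub_mk] at ht
    induction ht using Subgroup.closure_induction generalizing g with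
    | mem x hx =>
      have key : ∀ m : Fin n, m ∈ (s(i, j) : Sym2 (Fin n)) → ∀ g : Gam n,
          act n (g * gen m)⁻¹ a k = act n g⁻¹ a k := by
        intro m hm g
        rw [mul_inv_rev, gen_inv, map_mul, Equiv.Perm.mul_apply, act_gen]
        have hkm : k ≠ m := fun h => hk (h ▸ hm)
        exact bmap_apply_ne n m _ hkm
      rcases hx with rfl | rfl
      · exact key i (Sym2.mem_mk_left i j) g
      · exact key j (Sym2.mem_mk_right i j) g
    | one => rw [mul_one]
    | mul x y hx hy ihx ihy => rw [← mul_assoc]; rw [ihy, ihx]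
    | inv x hx ih =>
      have := ih (g := g * x⁻¹)
      rw [mul_assoc, inv_mul_cancel, mul_one] at this
      exact this.symm

/-- Representative version of the extended Hurwitz map. -/
def phiRep (n : ℕ) (a : Fin n → ℂ) (s : Sym2 (Fin n)) (g : Gam n) : ℂ :=
  ∏ k ∈ offPair s, act n g⁻¹ a k

/-- Representative version of the square sum weight. -/
def sigRep (n : ℕ) (a : Fin n → ℂ) (s : Sym2 (Fin n)) (g : Gam n) : ℂ :=
  ∑ k ∈ offPair s, (act n g⁻¹ a k) ^ 2

/-- The extended Hurwitz map `φ_a : 𝒜 → ℂ`, `φ(γ) = ∏_{k∉{i,j}} x_k`. -/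
def phiA (n : ℕ) (a : Fin n → ℂ) (γ : AltGeo n) : ℂ :=
  Quotient.liftOn' γ.coset (phiRep n a γ.pair) (by
    intro g h hgh
    have hmem : g⁻¹ * h ∈ pairSub γ.pair := QuotientGroup.leftRel_apply.mp hgh
    have : h = g * (g⁻¹ * h) := by group
    rw [this]
    unfold phiRep
    exact (Finset.prod_congr rfl fun k hk =>
      (coords_eq a γ.pair hmem g (Finset.mem_filter.mp hk).2)).symm)

/-- The square sum weight `σ_a : 𝒜 → ℂ`, `σ(γ) = ∑_{k∉{i,j}} x_k²`. -/
def sigA (n : ℕ) (a : Fin n → ℂ) (γ : AltGeo n) : ℂ :=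
  Quotient.liftOn' γ.coset (sigRep n a γ.pair) (by
    intro g h hgh
    have hmem : g⁻¹ * h ∈ pairSub γ.pair := QuotientGroup.leftRel_apply.mp hgh
    have : h = g * (g⁻¹ * h) := by group
    rw [this]
    unfold sigRep
    exact (Finset.sum_congr rfl fun k hk => by
      rw [coords_eq a γ.pair hmem g (Finset.mem_filter.mp hk).2]).symm)

/-- The set `𝒜_φ(K)` of alternating geodesics with `|φ(γ)| ≤ K`. -/
def AK (n : ℕ) (a : Fin n → ℂ) (K : ℝ) : Set (AltGeo n) :=
  {γ | ‖phiA n a γ‖ ≤ K}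

/-- The Bowditch domain `𝒟 ⊆ ℂⁿ`. -/
def BD (n : ℕ) : Set (Fin n → ℂ) :=
  {a | (∀ γ : AltGeo n, phiA n a γ ∉ (fun r : ℝ => (r : ℂ)) '' Set.Icc (-2 : ℝ) 2) ∧
    ∃ K : ℝ, 2 < K ∧ (AK n a K).Finite}



/-- Word length of `g ∈ Γₙ` with respect to the generators `b₁,…,bₙ`. -/
def glen (n : ℕ) (g : Gam n) : ℕ :=
  sInf {m | ∃ l : List (Fin n), l.length = m ∧ g = (l.map gen).prod}

/-- The alternating geodesic `[g;{i,k}]` through the vertex `g` with colors `{i,k}`. -/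
def mkGeo {n : ℕ} (i k : Fin n) (h : i ≠ k) (g : Gam n) : AltGeo n :=
  ⟨s(i, k), by rwa [Sym2.mk_isDiag_iff], QuotientGroup.mk g⟩

/-- `F : 𝒜 → ℕ` is the Fibonacci function relative to the root `v₀ = 1`:
`F(γ) = 1` if the root lies on `γ`, and otherwise `F(γ) = F([v*;{i,k}]) + F([v*;{j,k}])`,
where `v*` is the vertex of `γ` closest to the root and `k` is the label of the first
edge of the geodesic from `v*` to the root. -/
def IsFib (n : ℕ) (F : AltGeo n → ℕ) : Prop :=
  (∀ γ : AltGeo n, γ.coset = QuotientGroup.mk 1 → F γ = 1) ∧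
  (∀ γ : AltGeo n, γ.coset ≠ QuotientGroup.mk 1 →
    ∀ g : Gam n, QuotientGroup.mk g = γ.coset →
      (∀ h : Gam n, QuotientGroup.mk h = γ.coset → glen n g ≤ glen n h) →
      ∀ i j k : Fin n, γ.pair = s(i, j) → ∀ (hki : k ≠ i) (hkj : k ≠ j),
        glen n (g * gen k) < glen n g →
        F γ = F (mkGeo i k hki.symm g) + F (mkGeo j k hkj.symm g))

/-- `log⁺ t = max (0, log t)`. -/
def logp (t : ℝ) : ℝ := max 0 (Real.log t)

/-- The subgroup `⟨b_j : j ≠ i⟩`. -/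
def hatSub (n : ℕ) (i : Fin n) : Subgroup (Gam n) :=
  Subgroup.closure {g | ∃ j : Fin n, j ≠ i ∧ g = gen j}

lemma coord_eq (n : ℕ) (a : Fin n → ℂ) (i : Fin n) {t : Gam n}
    (ht : t ∈ hatSub n i) (g : Gam n) :
    act n (g * t)⁻¹ a i = act n g⁻¹ a i := by
  induction ht using Subgroup.closure_induction generalizing g with
  | mem x hx =>
    obtain ⟨j, hji, rfl⟩ := hx
    rw [mul_inv_rev, gen_inv, map_mul, Equiv.Perm.mul_apply, act_gen]
    exact bmap_apply_ne n j _ hji.symm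
  | one => rw [mul_one]
  | mul x y hx hy ihx ihy => rw [← mul_assoc, ihy, ihx]
  | inv x hx ih =>
    have := ih (g := g * x⁻¹)
    rw [mul_assoc, inv_mul_cancel, mul_one] at this
    exact this.symm

/-- For a coset `X = g⟨b_j : j ≠ i⟩ ∈ 𝒳ᵢ`, the (constant) `i`-th coordinate `φ(X)`. -/
def coordX (n : ℕ) (a : Fin n → ℂ) (i : Fin n) (X : Gam n ⧸ hatSub n i) : ℂ :=
  Quotient.liftOn' X (fun g => act n g⁻¹ a i) (by
    intro g h hgh
    have hmem : g⁻¹ * h ∈ hatSub n i := QuotientGroup.leftRel_apply.mp hgh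
    have hh : h = g * (g⁻¹ * h) := by group
    show act n g⁻¹ a i = act n h⁻¹ a i
    rw [hh, coord_eq n a i hmem g])

/-- `a ∈ ℂⁿ` is dihedral if some point of its `Γₙ`-orbit has two vanishing coordinates. -/
def Dihedral (n : ℕ) (a : Fin n → ℂ) : Prop :=
  ∃ (g : Gam n) (i j : Fin n), i ≠ j ∧ act n g a i = 0 ∧ act n g a j = 0

/-- The alternating geodesic `γ` contains the edge of color `i` incident to the vertex `g`. -/
def containsEdge {n : ℕ} (γ : AltGeo n) (g : Gam n) (i : Fin n) : Prop :=
  i ∈ γ.pair ∧ (QuotientGroup.mk g : Gam n ⧸ pairSub γ.pair) = γ.coset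

/-- Two alternating geodesics share an edge of the tree. -/
def ShareEdge {n : ℕ} (α β : AltGeo n) : Prop :=
  ∃ (g : Gam n) (i : Fin n), containsEdge α g i ∧ containsEdge β g i

/-- A set of alternating geodesics is edge-connected. -/
def EdgeConnected {n : ℕ} (P : Set (AltGeo n)) : Prop :=
  ∀ α ∈ P, ∀ β ∈ P, ∃ (m : ℕ) (c : ℕ → AltGeo n),
    c 0 = α ∧ c m = β ∧ (∀ t ≤ m, c t ∈ P) ∧ ∀ t < m, ShareEdge (c t) (c (t + 1))

/-- `h(z) = 1 − √(1 − 4/z²)`, with the principal square root (positive real part). -/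
def hfun (z : ℂ) : ℂ := 1 - (1 - 4 / z ^ 2) ^ ((1 : ℂ) / 2)

/-!
Every alternating geodesic is `wordProd u ⟨bᵢ, bⱼ⟩` for a reduced word `u` not ending in `i` or
`j`, whose product is the vertex closest to the root. Reading `u` backwards, the Fibonacci
recursion is a recursion on `u` (`weight`), which shows that `F` exceeds the length of `u` and
grows like the Fibonacci numbers in the number of places where `u` does not repeat the letter two
steps back. As `u` is determined by its length and these places with their letters, at most
`exp (O (log² m))` geodesics have `F = m`, so `∑ x ^ F γ` converges for every `x < 1`. For
`F γ > K C` the lower bound gives `f γ ^ (-t) ≤ exp (t C) · x ^ F γ` with `x = exp (-t / K)`.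
-/

section NormalForm

variable {n : ℕ}

def wordProd (l : List (Fin n)) : Gam n := (l.map gen).prod

@[simp] lemma wordProd_nil : wordProd ([] : List (Fin n)) = 1 := rfl

@[simp] lemma wordProd_cons (a : Fin n) (l : List (Fin n)) :
    wordProd (a :: l) = gen a * wordProd l := List.prod_cons

@[simp] lemma wordProd_append (l₁ l₂ : List (Fin n)) :
    wordProd (l₁ ++ l₂) = wordProd l₁ * wordProd l₂ := by simp [wordProd]

lemma wordProd_concat (l : List (Fin n)) (a : Fin n) :
    wordProd (l ++ [a]) = wordProd l * gen a := by simp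

lemma wordProd_reverse (l : List (Fin n)) : wordProd l.reverse = (wordProd l)⁻¹ := by
  induction l with
  | nil => simp
  | cons a t ih => simp [ih, gen_inv]

def reduceCons (i : Fin n) : List (Fin n) → List (Fin n)
  | [] => [i]
  | a :: t => if a = i then t else i :: a :: t

lemma reduceCons_isChain (i : Fin n) {l : List (Fin n)} (h : l.IsChain (· ≠ ·)) :
    (reduceCons i l).IsChain (· ≠ ·) := by
  cases l with
  | nil => simp [reduceCons]
  | cons a t =>
    by_cases ha : a = i
    · simpa [reduceCons, ha] using h.tail
    · simpa [reduceCons, ha] using List.isChain_cons_cons.mpr ⟨Ne.symm ha, h⟩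

lemma reduceCons_of_isChain_cons {i : Fin n} {l : List (Fin n)} (h : (i :: l).IsChain (· ≠ ·)) :
    reduceCons i l = i :: l := by
  cases l with
  | nil => rfl
  | cons a t => simp [reduceCons, Ne.symm (List.isChain_cons_cons.mp h).1]

lemma reduceCons_reduceCons (i : Fin n) {l : List (Fin n)} (h : l.IsChain (· ≠ ·)) :
    reduceCons i (reduceCons i l) = l := by
  cases l with
  | nil => simp [reduceCons]
  | cons a t =>
    by_cases ha : a = i
    · subst ha
      simp only [reduceCons, if_true]
      exact reduceCons_of_isChain_cons h
    · simp [reduceCons, ha]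

lemma wordProd_reduceCons (i : Fin n) (l : List (Fin n)) :
    wordProd (reduceCons i l) = gen i * wordProd l := by
  cases l with
  | nil => simp [reduceCons]
  | cons a t =>
    by_cases ha : a = i
    · subst ha
      simp [reduceCons, ← mul_assoc, gen_mul_self]
    · simp [reduceCons, ha]

lemma length_reduceCons_le (i : Fin n) (l : List (Fin n)) :
    (reduceCons i l).length ≤ l.length + 1 := by
  cases l with
  | nil => simp [reduceCons]
  | cons a t =>
    simp only [reduceCons]
    split_ifs <;> simp only [List.length_cons] <;> omega

lemma mem_of_mem_reduceCons {i c : Fin n} {l : List (Fin n)} (h : c ∈ reduceCons i l) :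
    c = i ∨ c ∈ l := by
  cases l with
  | nil => simpa [reduceCons] using h
  | cons a t =>
    by_cases ha : a = i
    · simp only [reduceCons, ha, if_true] at h
      exact Or.inr (List.mem_cons_of_mem _ h)
    · simpa [reduceCons, ha] using h

abbrev ReducedWord (n : ℕ) := {l : List (Fin n) // l.IsChain (· ≠ ·)}

def reducedAction : Gam n →* Equiv.Perm (ReducedWord n) :=
  PresentedGroup.toGroup (f := fun i =>
    Function.Involutive.toPerm (fun l => ⟨reduceCons i l.1, reduceCons_isChain i l.2⟩)
      fun l => Subtype.ext (reduceCons_reduceCons i l.2)) (by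
    rintro r ⟨i, rfl⟩
    rw [map_mul, FreeGroup.lift_apply_of]
    exact Equiv.ext fun l => Subtype.ext (reduceCons_reduceCons i l.2))

lemma reducedAction_gen (i : Fin n) (l : ReducedWord n) :
    (reducedAction (gen i) l).1 = reduceCons i l.1 := by
  rw [reducedAction, gen, PresentedGroup.toGroup.of]
  rfl

lemma wordProd_reducedAction (g : Gam n) (l : ReducedWord n) :
    wordProd (reducedAction g l).1 = g * wordProd l.1 := by
  have hg : g ∈ Subgroup.closure (Set.range (gen : Fin n → Gam n)) := by
    rw [show (gen : Fin n → Gam n) = PresentedGroup.of from rfl,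
      PresentedGroup.closure_range_of]
    trivial
  induction hg using Subgroup.closure_induction generalizing l with
  | mem x hx =>
    obtain ⟨i, rfl⟩ := hx
    rw [reducedAction_gen, wordProd_reduceCons]
  | one => simp
  | mul x y _ _ hx hy =>
    rw [map_mul, Equiv.Perm.mul_apply, hx, hy, mul_assoc]
  | inv x _ hx =>
    have h := hx (reducedAction x⁻¹ l)
    rw [← Equiv.Perm.mul_apply, ← map_mul, mul_inv_cancel, map_one, Equiv.Perm.one_apply] at h
    rw [h, inv_mul_cancel_left]

def normalForm (g : Gam n) : List (Fin n) := (reducedAction g ⟨[], .nil⟩).1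

lemma normalForm_isChain (g : Gam n) : (normalForm g).IsChain (· ≠ ·) :=
  (reducedAction g ⟨[], .nil⟩).2

@[simp] lemma wordProd_normalForm (g : Gam n) : wordProd (normalForm g) = g := by
  simp [normalForm, wordProd_reducedAction]

lemma normalForm_gen_mul (i : Fin n) (g : Gam n) :
    normalForm (gen i * g) = reduceCons i (normalForm g) := by
  rw [normalForm, map_mul, Equiv.Perm.mul_apply, reducedAction_gen]
  rfl

lemma normalForm_wordProd {l : List (Fin n)} (h : l.IsChain (· ≠ ·)) :
    normalForm (wordProd l) = l := by
  induction l with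
  | nil => rfl
  | cons a t ih =>
    rw [wordProd_cons, normalForm_gen_mul, ih h.tail, reduceCons_of_isChain_cons h]

lemma length_normalForm_wordProd_le (l : List (Fin n)) :
    (normalForm (wordProd l)).length ≤ l.length := by
  induction l with
  | nil => rfl
  | cons a t ih =>
    rw [wordProd_cons, normalForm_gen_mul]
    exact (length_reduceCons_le _ _).trans (by simpa using ih)

lemma mem_of_mem_normalForm_wordProd {l : List (Fin n)} {c : Fin n}
    (h : c ∈ normalForm (wordProd l)) : c ∈ l := by
  induction l with
  | nil => rw [normalForm_wordProd .nil] at h; cases h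
  | cons a t ih =>
    rw [wordProd_cons, normalForm_gen_mul] at h
    rcases mem_of_mem_reduceCons h with rfl | h
    · exact List.mem_cons_self
    · exact List.mem_cons_of_mem _ (ih h)

lemma glen_eq_length_normalForm (g : Gam n) : glen n g = (normalForm g).length := by
  have hmem : (normalForm g).length ∈
      {m | ∃ l : List (Fin n), l.length = m ∧ g = (l.map gen).prod} :=
    ⟨normalForm g, rfl, (wordProd_normalForm g).symm⟩
  refine le_antisymm (Nat.sInf_le hmem) ?_
  obtain ⟨l, hl, rfl⟩ := Nat.sInf_mem ⟨_, hmem⟩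
  rw [glen, ← hl]
  exact length_normalForm_wordProd_le l

lemma glen_wordProd {l : List (Fin n)} (h : l.IsChain (· ≠ ·)) :
    glen n (wordProd l) = l.length := by
  rw [glen_eq_length_normalForm, normalForm_wordProd h]

end NormalForm

section Core

variable {n : ℕ}

lemma gen_mem_pairSub {p : Sym2 (Fin n)} {c : Fin n} (hc : c ∈ p) : gen c ∈ pairSub p := by
  induction p using Sym2.ind with
  | _ i j =>
    rw [pairSub_mk]
    exact Subgroup.subset_closure (by rcases Sym2.mem_iff.mp hc with rfl | rfl <;> simp)

lemma wordProd_mem_pairSub {p : Sym2 (Fin n)} {l : List (Fin n)} (h : ∀ c ∈ l, c ∈ p) :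
    wordProd l ∈ pairSub p := by
  induction l with
  | nil => exact one_mem _
  | cons a t ih =>
    rw [wordProd_cons]
    exact mul_mem (gen_mem_pairSub (h a List.mem_cons_self))
      (ih fun c hc => h c (List.mem_cons_of_mem a hc))

lemma exists_wordProd_eq_of_mem_pairSub {p : Sym2 (Fin n)} {t : Gam n} (ht : t ∈ pairSub p) :
    ∃ l : List (Fin n), (∀ c ∈ l, c ∈ p) ∧ wordProd l = t := by
  induction p using Sym2.ind with
  | _ i j =>
    rw [pairSub_mk] at ht
    induction ht using Subgroup.closure_induction with
    | mem x hx =>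
      rcases hx with rfl | rfl
      · exact ⟨[i], by simp, by simp⟩
      · exact ⟨[j], by simp, by simp⟩
    | one => exact ⟨[], by simp, rfl⟩
    | mul x y _ _ hx hy =>
      obtain ⟨lx, hlx, rfl⟩ := hx
      obtain ⟨ly, hly, rfl⟩ := hy
      exact ⟨lx ++ ly, List.forall_mem_append.mpr ⟨hlx, hly⟩, wordProd_append _ _⟩
    | inv x _ hx =>
      obtain ⟨l, hl, rfl⟩ := hx
      exact ⟨l.reverse, by simpa using hl, wordProd_reverse l⟩

lemma mem_of_mem_normalForm_of_mem_pairSub {p : Sym2 (Fin n)} {t : Gam n} (ht : t ∈ pairSub p)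
    {c : Fin n} (hc : c ∈ normalForm t) : c ∈ p := by
  obtain ⟨l, hl, rfl⟩ := exists_wordProd_eq_of_mem_pairSub ht
  exact hl c (mem_of_mem_normalForm_wordProd hc)

/-- The product of a core of `p` is the vertex of the alternating geodesic `wordProd u ⟨p⟩`
closest to the root. -/
def IsCore (p : Sym2 (Fin n)) (u : List (Fin n)) : Prop :=
  u.IsChain (· ≠ ·) ∧ ∀ k ∈ u.getLast?, k ∉ p

lemma IsCore.normalForm_wordProd_mul {p : Sym2 (Fin n)} {u : List (Fin n)} (hu : IsCore p u)
    {t : Gam n} (ht : t ∈ pairSub p) : normalForm (wordProd u * t) = u ++ normalForm t := by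
  refine (congrArg normalForm (by simp)).trans (normalForm_wordProd ?_)
  refine hu.1.append (normalForm_isChain t) fun k hk c hc hkc => hu.2 k hk ?_
  exact hkc ▸ mem_of_mem_normalForm_of_mem_pairSub ht (List.mem_of_mem_head? hc)

lemma IsCore.glen_le_glen_mul {p : Sym2 (Fin n)} {u : List (Fin n)} (hu : IsCore p u)
    {t : Gam n} (ht : t ∈ pairSub p) : glen n (wordProd u) ≤ glen n (wordProd u * t) := by
  rw [glen_wordProd hu.1, glen_eq_length_normalForm, hu.normalForm_wordProd_mul ht,
    List.length_append]
  exact Nat.le_add_right _ _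

lemma IsCore.wordProd_notMem {p : Sym2 (Fin n)} {u : List (Fin n)} (hu : IsCore p u)
    {k : Fin n} (hk : u.getLast? = some k) : wordProd u ∉ pairSub p := fun h =>
  hu.2 k hk <| mem_of_mem_normalForm_of_mem_pairSub h <| by
    rw [normalForm_wordProd hu.1]
    exact List.mem_of_getLast? hk

lemma exists_isCore_append (p : Sym2 (Fin n)) {l : List (Fin n)} (hl : l.IsChain (· ≠ ·)) :
    ∃ u v, IsCore p u ∧ (∀ c ∈ v, c ∈ p) ∧ l = u ++ v := by
  induction l using List.reverseRecOn with
  | nil => exact ⟨[], [], ⟨.nil, by simp⟩, by simp, rfl⟩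
  | append_singleton l a ih =>
    by_cases ha : a ∈ p
    · obtain ⟨u, v, hu, hv, rfl⟩ := ih (List.isChain_append.mp hl).1
      exact ⟨u, v ++ [a], hu, List.forall_mem_append.mpr ⟨hv, by simpa using ha⟩, by simp⟩
    · exact ⟨l ++ [a], [], ⟨hl, by simpa using ha⟩, by simp, by simp⟩

lemma mkGeo_mul_of_mem {i j : Fin n} (h : i ≠ j) (g : Gam n) {t : Gam n}
    (ht : t ∈ pairSub s(i, j)) : mkGeo i j h (g * t) = mkGeo i j h g := by
  simp only [mkGeo, AltGeo.mk.injEq, heq_eq_eq, true_and]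
  exact QuotientGroup.eq.mpr (by simpa using inv_mem ht)

lemma mkGeo_comm {i j : Fin n} (h : i ≠ j) (g : Gam n) : mkGeo i j h g = mkGeo j i h.symm g := by
  have hs : s(i, j) = s(j, i) := Sym2.eq_swap
  simp only [mkGeo, AltGeo.mk.injEq]
  exact ⟨hs, by rw [hs]⟩

lemma AltGeo.exists_eq_mkGeo (γ : AltGeo n) :
    ∃ i j, ∃ hij : i ≠ j, ∃ u, IsCore s(i, j) u ∧ γ = mkGeo i j hij (wordProd u) := by
  obtain ⟨p, nd, c⟩ := γ
  induction p using Sym2.ind with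
  | _ i j =>
    have hij : i ≠ j := fun h => nd (Sym2.mk_isDiag_iff.mpr h)
    induction c using QuotientGroup.induction_on with
    | H g =>
      obtain ⟨u, v, hu, hv, hg⟩ := exists_isCore_append s(i, j) (normalForm_isChain g)
      refine ⟨i, j, hij, u, hu, ?_⟩
      rw [← mkGeo_mul_of_mem hij _ (wordProd_mem_pairSub hv), ← wordProd_append, ← hg,
        wordProd_normalForm]
      rfl

end Core

section Weight

variable {α : Type*} [DecidableEq α]

/-- For a reduced word `k :: r` read from its last letter `k` backwards, `weight (k :: r) c`
(`c ≠ k`) is the value of the Fibonacci function on the `{c, k}`-geodesic through the vertex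
`wordProd (k :: r).reverse` (see `IsFib.eq_weight`). -/
def weight : List α → α → ℕ
  | [], _ => 0
  | [k], c => if c = k then 0 else 1
  | a :: b :: r, c => if c = a then 0 else weight (b :: r) c + weight (b :: r) a

lemma weight_cons_cons_of_ne {a b c : α} (r : List α) (hc : c ≠ a) :
    weight (a :: b :: r) c = weight (b :: r) c + weight (b :: r) a := if_neg hc

@[simp] lemma weight_self (k : α) (r : List α) : weight (k :: r) k = 0 := by
  cases r <;> simp [weight]

/-- The pairs `(position, letter)` at which `r.reverse` does not repeat the letter two steps
before (so the first two positions always count); positions are counted from the start of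
`r.reverse`. -/
def marks : List α → List (ℕ × α)
  | [] => []
  | a :: r => if r[1]? = some a then marks r else (r.length, a) :: marks r

lemma fst_lt_length_of_mem_marks {r : List α} {e : ℕ × α} (he : e ∈ marks r) :
    e.1 < r.length := by
  induction r with
  | nil => cases he
  | cons a r ih =>
    simp only [marks] at he
    split_ifs at he
    · exact (ih he).trans (Nat.lt_succ_self _)
    · rcases List.mem_cons.mp he with rfl | he
      · exact Nat.lt_succ_self _
      · exact (ih he).trans (Nat.lt_succ_self _)

lemma eq_of_marks_eq {r₁ r₂ : List α} (hlen : r₁.length = r₂.length)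
    (hm : marks r₁ = marks r₂) : r₁ = r₂ := by
  induction r₁ generalizing r₂ with
  | nil => exact (List.length_eq_zero_iff.mp hlen.symm).symm
  | cons a₁ t₁ ih =>
    obtain _ | ⟨a₂, t₂⟩ := r₂
    · simp at hlen
    have hlen' : t₁.length = t₂.length := by simpa using hlen
    have not_mem : ∀ {t t' : List α} {a : α}, t.length = t'.length →
        (t'.length, a) ∉ marks t := fun h he => by
      have := fst_lt_length_of_mem_marks he
      simp only at this
      omega
    simp only [marks] at hm
    split_ifs at hm with h₁ h₂ h₂
    · have ht := ih hlen' hm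
      rw [ht] at h₁
      rw [ht, Option.some_inj.mp (h₁.symm.trans h₂)]
    · exact absurd (hm ▸ List.mem_cons_self) (not_mem hlen')
    · exact absurd (hm ▸ List.mem_cons_self) (not_mem hlen'.symm)
    · simp only [List.cons.injEq, Prod.mk.injEq] at hm
      rw [hm.1.2, ih hlen' hm.2]

lemma le_weight {k : α} {r : List α} (hr : (k :: r).IsChain (· ≠ ·)) {c : α} (hc : c ≠ k) :
    1 ≤ weight (k :: r) c ∧ Nat.fib (marks (k :: r)).length ≤ weight (k :: r) c ∧
      (r[0]? ≠ some c →
        Nat.fib ((marks (k :: r)).length + 1) ≤ weight (k :: r) c ∧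
          (k :: r).length ≤ weight (k :: r) c) := by
  induction r generalizing k c with
  | nil => simp [weight, marks, hc]
  | cons b t ih =>
    have hkb : k ≠ b := (List.isChain_cons_cons.mp hr).1
    have ihc := ih (List.isChain_cons_cons.mp hr).2 (c := c)
    obtain ⟨hk1, hkM, hk⟩ := ih (List.isChain_cons_cons.mp hr).2 hkb
    rw [weight_cons_cons_of_ne t hc]
    have hfib : Nat.fib ((marks (b :: t)).length + 1 + 1) =
        Nat.fib (marks (b :: t)).length + Nat.fib ((marks (b :: t)).length + 1) := Nat.fib_add_two
    by_cases hjump : t[0]? = some k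
    · have hM : marks (k :: b :: t) = marks (b :: t) := if_pos (by simpa using hjump)
      rw [hM]
      refine ⟨by omega, by omega, fun hcb => ?_⟩
      have hcb : c ≠ b := fun h => hcb (by simp [h])
      obtain ⟨-, -, hc'⟩ := ihc hcb
      have := hc' (by rw [hjump]; simpa using hc.symm)
      simp only [List.length_cons] at this ⊢
      omega
    · have hM : marks (k :: b :: t) = ((b :: t).length, k) :: marks (b :: t) :=
        if_neg (by simpa using hjump)
      obtain ⟨hkM', hklen⟩ := hk hjump
      rw [hM, List.length_cons]
      refine ⟨by omega, by omega, fun hcb => ?_⟩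
      have hcb : c ≠ b := fun h => hcb (by simp [h])
      obtain ⟨hc1, hcM, -⟩ := ihc hcb
      simp only [List.length_cons] at hklen ⊢
      omega

end Weight

namespace IsFib

variable {n : ℕ} {F : AltGeo n → ℕ}

lemma eq_one_of_mem (hF : IsFib n F) {i j : Fin n} (hij : i ≠ j) {g : Gam n}
    (hg : g ∈ pairSub s(i, j)) : F (mkGeo i j hij g) = 1 :=
  hF.1 _ (QuotientGroup.eq.mpr (by simpa using inv_mem hg))

lemma eq_add_of_isCore (hF : IsFib n F) {i j k : Fin n} (hij : i ≠ j) (hik : i ≠ k) (hjk : j ≠ k)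
    {u : List (Fin n)} (hu : IsCore s(i, j) u) (hk : u.getLast? = some k) :
    F (mkGeo i j hij (wordProd u)) =
      F (mkGeo i k hik (wordProd u)) + F (mkGeo j k hjk (wordProd u)) := by
  have hne : (mkGeo i j hij (wordProd u)).coset ≠ QuotientGroup.mk 1 := fun h =>
    hu.wordProd_notMem hk (by simpa using inv_mem (QuotientGroup.eq.mp h))
  have hmin (g : Gam n) (hg : QuotientGroup.mk g = (mkGeo i j hij (wordProd u)).coset) :
      glen n (wordProd u) ≤ glen n g := by
    simpa using hu.glen_le_glen_mul (QuotientGroup.eq.mp hg.symm)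
  have hdesc : glen n (wordProd u * gen k) < glen n (wordProd u) := by
    have hdrop : wordProd u * gen k = wordProd u.dropLast := by
      conv_lhs => rw [← List.dropLast_append_getLast? k hk]
      rw [wordProd_concat, mul_assoc, gen_mul_self, mul_one]
    rw [hdrop, glen_wordProd hu.1.dropLast, glen_wordProd hu.1, List.length_dropLast]
    have := List.length_pos_of_mem (List.mem_of_getLast? hk)
    omega
  exact hF.2 _ hne _ rfl hmin i j k rfl hik.symm hjk.symm hdesc

lemma eq_weight (hF : IsFib n F) {k : Fin n} {r : List (Fin n)} (hr : (k :: r).IsChain (· ≠ ·))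
    {c : Fin n} (hc : c ≠ k) :
    F (mkGeo c k hc (wordProd (k :: r).reverse)) = weight (k :: r) c := by
  induction r generalizing k c with
  | nil =>
    simpa [weight, hc] using hF.eq_one_of_mem hc (gen_mem_pairSub (Sym2.mem_mk_right c k))
  | cons b t ih =>
    have hkb : k ≠ b := (List.isChain_cons_cons.mp hr).1
    have hbt := (List.isChain_cons_cons.mp hr).2
    rw [List.reverse_cons, wordProd_concat,
      mkGeo_mul_of_mem hc _ (gen_mem_pairSub (Sym2.mem_mk_right c k)),
      weight_cons_cons_of_ne t hc]
    by_cases hcb : c = b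
    · subst hcb
      rw [mkGeo_comm, ih hbt hkb, weight_self, zero_add]
    · have hcore : IsCore s(c, k) (b :: t).reverse := by
        refine ⟨List.isChain_reverse.mpr (hbt.imp fun _ _ h => Ne.symm h), fun a ha => ?_⟩
        simp only [List.getLast?_reverse, List.head?_cons, Option.mem_def,
          Option.some_inj] at ha
        subst ha
        simp [Sym2.mem_iff, Ne.symm hcb, hkb.symm]
      rw [hF.eq_add_of_isCore hc hcb hkb hcore (by simp), ih hbt hcb, ih hbt hkb]

lemma length_lt_and_fib_le (hF : IsFib n F) {i j : Fin n} (hij : i ≠ j) {u : List (Fin n)}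
    (hu : IsCore s(i, j) u) :
    u.length < F (mkGeo i j hij (wordProd u)) ∧
      Nat.fib ((marks u.reverse).length + 2) ≤ F (mkGeo i j hij (wordProd u)) := by
  cases hk : u.getLast? with
  | none =>
    obtain rfl := List.getLast?_eq_none_iff.mp hk
    simp [hF.eq_one_of_mem hij (one_mem _), marks]
  | some k =>
    have hki : k ∉ s(i, j) := hu.2 k hk
    simp only [Sym2.mem_iff, not_or] at hki
    obtain ⟨r, hr⟩ := List.head?_eq_some_iff.mp (by rwa [List.head?_reverse])
    have hrc : (k :: r).IsChain (· ≠ ·) :=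
      hr ▸ List.isChain_reverse.mpr (hu.1.imp fun _ _ h => Ne.symm h)
    have hu' : u = (k :: r).reverse := by rw [← hr, List.reverse_reverse]
    have hlen : u.length = (k :: r).length := by rw [hu', List.length_reverse]
    rw [hF.eq_add_of_isCore hij (Ne.symm hki.1) (Ne.symm hki.2) hu hk, hu',
      hF.eq_weight hrc, hF.eq_weight hrc, ← hu', hr, hlen]
    have hfib : Nat.fib ((marks (k :: r)).length + 2) =
        Nat.fib (marks (k :: r)).length + Nat.fib ((marks (k :: r)).length + 1) := Nat.fib_add_two
    obtain ⟨hi1, hiM, hi⟩ := le_weight hrc (Ne.symm hki.1)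
    obtain ⟨hj1, hjM, hj⟩ := le_weight hrc (Ne.symm hki.2)
    by_cases hri : r[0]? = some i
    · have hrj : r[0]? ≠ some j := by rw [hri]; simpa using hij
      have := hj hrj
      omega
    · have := hi hri
      omega

end IsFib

lemma two_pow_le_fib (j : ℕ) : 2 ^ j ≤ Nat.fib (2 * j + 2) := by
  induction j with
  | zero => simp
  | succ j ih =>
    have h : Nat.fib (2 * (j + 1) + 2) = Nat.fib (2 * j + 2) + Nat.fib (2 * j + 3) := by
      rw [show 2 * (j + 1) + 2 = 2 * j + 2 + 2 by ring, Nat.fib_add_two]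
    have : Nat.fib (2 * j + 2) ≤ Nat.fib (2 * j + 3) := Nat.fib_le_fib_succ
    rw [pow_succ, h]
    omega

lemma le_two_mul_log_of_fib_le {M m : ℕ} (h : Nat.fib (M + 2) ≤ m) : M ≤ 2 * Nat.log 2 m + 1 := by
  have hm : m ≠ 0 := (Nat.fib_pos.mpr (Nat.succ_pos _)).trans_le h |>.ne'
  have : M / 2 ≤ Nat.log 2 m := Nat.le_log_of_pow_le one_lt_two <|
    (two_pow_le_fib _).trans <| (Nat.fib_mono (by omega)).trans h
  omega

lemma _root_.List.eq_of_getElem?_eq_of_length_le {β : Type*} {D : ℕ} {l₁ l₂ : List β}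
    (h₁ : l₁.length ≤ D) (h₂ : l₂.length ≤ D) (h : ∀ t : Fin D, l₁[t]? = l₂[t]?) : l₁ = l₂ :=
  List.ext_getElem? fun t => if ht : t < D then h ⟨t, ht⟩ else by
    rw [List.getElem?_eq_none (by omega), List.getElem?_eq_none (by omega)]

section Code

variable {n : ℕ}

def code (D : ℕ) (i j : Fin n) (u : List (Fin n)) :
    Fin n × Fin n × ℕ × (Fin D → Option (ℕ × Fin n)) :=
  (i, j, u.length, fun t => (marks u.reverse)[t]?)

def codeSet (n m D : ℕ) : Finset (Fin n × Fin n × ℕ × (Fin D → Option (ℕ × Fin n))) :=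
  (Finset.univ : Finset (Fin n)) ×ˢ (Finset.univ : Finset (Fin n)) ×ˢ Finset.range (m + 1) ×ˢ
    Fintype.piFinset fun _ => insert none
      ((Finset.range (m + 1) ×ˢ (Finset.univ : Finset (Fin n))).map Function.Embedding.some)

lemma card_codeSet (n m D : ℕ) :
    (codeSet n m D).card = n * n * (m + 1) * ((m + 1) * n + 1) ^ D := by
  simp [codeSet, Fintype.card_piFinset, Finset.card_insert_of_notMem]
  ring

lemma code_mem_codeSet {m : ℕ} (D : ℕ) (i j : Fin n) {u : List (Fin n)} (hu : u.length ≤ m) :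
    code D i j u ∈ codeSet n m D := by
  simp only [code, codeSet, Finset.mem_product, Finset.mem_univ, Finset.mem_range,
    Fintype.mem_piFinset, true_and]
  refine ⟨by omega, fun t => ?_⟩
  cases he : (marks u.reverse)[t.1]? with
  | none => exact Finset.mem_insert_self _ _
  | some e =>
    have := fst_lt_length_of_mem_marks (List.mem_of_getElem? he)
    rw [List.length_reverse] at this
    simp [Function.Embedding.some]
    omega

lemma eq_of_code_eq {D : ℕ} {i₁ j₁ i₂ j₂ : Fin n} {u₁ u₂ : List (Fin n)}
    (h₁ : (marks u₁.reverse).length ≤ D) (h₂ : (marks u₂.reverse).length ≤ D)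
    (h : code D i₁ j₁ u₁ = code D i₂ j₂ u₂) : i₁ = i₂ ∧ j₁ = j₂ ∧ u₁ = u₂ := by
  simp only [code, Prod.mk.injEq] at h
  obtain ⟨hi, hj, hlen, hmarks⟩ := h
  refine ⟨hi, hj, List.reverse_injective (eq_of_marks_eq (by simpa using hlen) ?_)⟩
  exact List.eq_of_getElem?_eq_of_length_le h₁ h₂ (congrFun hmarks)

end Code

def codeCount (n m : ℕ) : ℕ := n * n * (m + 1) * ((m + 1) * n + 1) ^ (2 * Nat.log 2 m + 1)

lemma IsFib.card_le_codeCount {n : ℕ} {F : AltGeo n → ℕ} (hF : IsFib n F) {m : ℕ}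
    {s : Finset (AltGeo n)} (hs : ∀ γ ∈ s, F γ = m) :
    s.card ≤ codeCount n m := by
  choose i j hij u hu hγ using AltGeo.exists_eq_mkGeo (n := n)
  have hbound (γ) (h : γ ∈ s) :
      (u γ).length ≤ m ∧ (marks (u γ).reverse).length ≤ 2 * Nat.log 2 m + 1 := by
    have := hF.length_lt_and_fib_le (hij γ) (hu γ)
    rw [← hγ γ, hs γ h] at this
    exact ⟨this.1.le, le_two_mul_log_of_fib_le this.2⟩
  rw [codeCount, ← card_codeSet]
  refine Finset.card_le_card_of_injOn (fun γ => code _ (i γ) (j γ) (u γ))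
    (fun γ h => code_mem_codeSet _ _ _ (hbound γ h).1) fun γ₁ h₁ γ₂ h₂ hc => ?_
  obtain ⟨hi, hj, hu⟩ := eq_of_code_eq (hbound γ₁ h₁).2 (hbound γ₂ h₂).2 hc
  rw [hγ γ₁, hγ γ₂]
  congr 1
  rw [hu]

open Real Filter Asymptotics

lemma natLog_two_mul_log_two_le (m : ℕ) : (Nat.log 2 m : ℝ) * log 2 ≤ log (m + 1) := by
  have h : (2 : ℝ) ^ Nat.log 2 m ≤ m + 1 := by
    exact_mod_cast (Nat.pow_log_le_self 2 m.succ_ne_zero).trans'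
      (Nat.pow_le_pow_right two_pos (Nat.log_mono_right m.le_succ))
  simpa [log_pow] using log_le_log (by positivity) h

lemma codeCount_le_exp (n m : ℕ) :
    (codeCount n m : ℝ) ≤ exp (4 * (1 + log (n + 1)) * (log (m + 1) + 1) ^ 2) := by
  set D := 2 * Nat.log 2 m + 1
  set X := (m + 1) * (n + 1)
  have hX : 0 < (X : ℝ) := by positivity
  have hn : n ≤ X := by simp only [X]; nlinarith
  have hm : m + 1 ≤ X := by simp only [X]; nlinarith
  have hmn : (m + 1) * n + 1 ≤ X := by simp only [X]; nlinarith
  have hcount : codeCount n m ≤ X ^ (D + 3) := by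
    calc codeCount n m ≤ X * X * X * X ^ D :=
          Nat.mul_le_mul (Nat.mul_le_mul (Nat.mul_le_mul hn hn) hm) (Nat.pow_le_pow_left hmn D)
      _ = X ^ (D + 3) := by ring
  have hlogX : log X = log (m + 1) + log (n + 1) := by
    rw [show (X : ℝ) = (m + 1) * (n + 1) by push_cast [X]; ring, log_mul] <;> positivity
  have hD : (D + 3 : ℝ) ≤ 4 * (log (m + 1) + 1) := by
    have := log_two_gt_d9
    have := natLog_two_mul_log_two_le m
    have : 0 ≤ (Nat.log 2 m : ℝ) := Nat.cast_nonneg _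
    push_cast [D]
    nlinarith
  have hL : 0 ≤ log ((m : ℝ) + 1) := log_nonneg (by simp)
  have hb : 0 ≤ log ((n : ℝ) + 1) := log_nonneg (by simp)
  calc (codeCount n m : ℝ) ≤ (X : ℝ) ^ (D + 3) := by exact_mod_cast hcount
    _ = exp (((D + 3 : ℕ) : ℝ) * log X) := by rw [← log_pow, exp_log (by positivity)]
    _ ≤ exp (4 * (1 + log (n + 1)) * (log (m + 1) + 1) ^ 2) := by
      refine exp_le_exp.mpr ?_
      have h1 := mul_le_mul_of_nonneg_right hD (add_nonneg hL hb)
      have h2 : log (m + 1) + log (n + 1) ≤ (log (m + 1) + 1) * (1 + log (n + 1)) := by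
        nlinarith [mul_nonneg hL hb]
      have h3 := mul_le_mul_of_nonneg_left h2 (by positivity : (0 : ℝ) ≤ 4 * (log (m + 1) + 1))
      rw [hlogX]
      push_cast at h1 ⊢
      nlinarith

lemma isLittleO_log_add_one_sq (c : ℝ) :
    (fun m : ℕ => c * (log (m + 1) + 1) ^ 2) =o[atTop] (fun m : ℕ => (m : ℝ)) := by
  have htendsto : Tendsto (fun m : ℕ => exp 1 * ((m : ℝ) + 1)) atTop atTop :=
    (tendsto_natCast_atTop_atTop.atTop_add tendsto_const_nhds).const_mul_atTop (exp_pos 1)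
  have hlin : (fun m : ℕ => exp 1 * ((m : ℝ) + 1)) =O[atTop] (fun m : ℕ => (m : ℝ)) := by
    refine IsBigO.of_bound (2 * exp 1) ?_
    filter_upwards [eventually_ge_atTop 1] with m hm
    have : (1 : ℝ) ≤ m := by exact_mod_cast hm
    rw [norm_of_nonneg (by positivity), norm_of_nonneg (by positivity)]
    nlinarith [exp_pos 1]
  have hsq := (isLittleO_pow_log_id_atTop (n := 2)).comp_tendsto htendsto |>.trans_isBigO hlin
  refine (hsq.const_mul_left c).congr_left fun m => ?_
  rw [Function.comp_apply, log_mul (exp_pos 1).ne' (by positivity), log_exp, add_comm]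

lemma summable_mul_pow_of_le_exp {a g : ℕ → ℝ} (hg : g =o[atTop] (fun m : ℕ => (m : ℝ)))
    (ha0 : ∀ m, 0 ≤ a m) (ha : ∀ m, a m ≤ exp (g m)) {x : ℝ} (hx0 : 0 < x) (hx1 : x < 1) :
    Summable fun m => a m * x ^ m := by
  obtain ⟨y, hxy, hy1⟩ := exists_between hx1
  have hε : 0 < log (y / x) := log_pos ((one_lt_div hx0).mpr hxy)
  refine (summable_geometric_of_lt_one (hx0.trans hxy).le hy1).of_norm_bounded_eventually_nat ?_
  filter_upwards [hg.bound hε] with m hm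
  rw [norm_mul, norm_pow, norm_of_nonneg (ha0 m), norm_of_nonneg hx0.le]
  rw [norm_natCast] at hm
  calc a m * x ^ m ≤ exp (m * log (y / x)) * x ^ m := by
        gcongr
        exact (ha m).trans (exp_le_exp.mpr (by linarith [le_norm_self (g m)]))
    _ = y ^ m := by
        rw [exp_nat_mul, exp_log (div_pos (hx0.trans hxy) hx0), div_pow,
          div_mul_cancel₀ _ (pow_pos hx0 m).ne']

lemma summable_pow_of_card_le {α : Type*} (F : α → ℕ) (N : ℕ → ℕ)
    (hN : ∀ m (s : Finset α), (∀ a ∈ s, F a = m) → s.card ≤ N m) {x : ℝ} (hx : 0 ≤ x)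
    (hs : Summable fun m => (N m : ℝ) * x ^ m) : Summable fun a => x ^ F a := by
  classical
  refine summable_of_sum_le (c := ∑' m, (N m : ℝ) * x ^ m) (fun a => pow_nonneg hx _) fun s => ?_
  calc ∑ a ∈ s, x ^ F a = ∑ m ∈ s.image F, ((s.filter (F · = m)).card : ℝ) * x ^ m := by
        simp [Finset.sum_comp (fun m => x ^ m) F, nsmul_eq_mul]
    _ ≤ ∑ m ∈ s.image F, (N m : ℝ) * x ^ m := by
        gcongr with m
        exact_mod_cast hN m _ fun a ha => (Finset.mem_filter.mp ha).2
    _ ≤ ∑' m, (N m : ℝ) * x ^ m := hs.sum_le_tsum _ fun m _ => by positivity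

lemma IsFib.summable_pow {n : ℕ} {F : AltGeo n → ℕ} (hF : IsFib n F) {x : ℝ} (hx0 : 0 < x)
    (hx1 : x < 1) : Summable fun γ => x ^ F γ :=
  summable_pow_of_card_le F (codeCount n) (fun _ _ => hF.card_le_codeCount) hx0.le <|
    summable_mul_pow_of_le_exp (isLittleO_log_add_one_sq _) (fun _ => Nat.cast_nonneg _)
      (codeCount_le_exp n) hx0 hx1

lemma norm_rpow_neg_le_of_le_logp {y K C t : ℝ} {m : ℕ} (hK : 0 < K) (ht : 0 ≤ t)
    (hm : K * C < m) (hy : K⁻¹ * m - C ≤ logp y) :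
    ‖y ^ (-t)‖ ≤ exp (t * C) * exp (-(t / K)) ^ m := by
  have hpos : 0 < K⁻¹ * m - C := sub_pos.mpr ((lt_inv_mul_iff₀ hK).mpr hm)
  have hlog : K⁻¹ * m - C ≤ log y := (le_max_iff.mp hy).resolve_left hpos.not_ge
  have hy0 : 0 < |y| := abs_pos.mpr fun h => by simp [h] at hlog; linarith
  calc ‖y ^ (-t)‖ ≤ |y| ^ (-t) := abs_rpow_le_abs_rpow y (-t)
    _ = exp (log y * (-t)) := by rw [rpow_def_of_pos hy0, log_abs]
    _ ≤ exp ((K⁻¹ * m - C) * (-t)) := exp_le_exp.mpr (mul_le_mul_of_nonpos_right hlog (by linarith))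
    _ = exp (t * C) * exp (-(t / K)) ^ m := by
      rw [← exp_nat_mul, ← exp_add]
      congr 1
      field_simp
      ring

theorem lower_fib_bound_summable_general (n : ℕ)
    (F : AltGeo n → ℕ) (hF : IsFib n F)
    (f : AltGeo n → ℝ)
    (K C : ℝ) (hK : 0 < K)
    (hlow : ∀ γ : AltGeo n, K⁻¹ * (F γ : ℝ) - C ≤ logp (f γ)) :
    ∀ t : ℝ, 0 < t → Summable fun γ : AltGeo n => f γ ^ (-t) := by
  intro t ht
  have hx1 : exp (-(t / K)) < 1 := exp_lt_one_iff.mpr (neg_lt_zero.mpr (div_pos ht hK))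
  have hsum := hF.summable_pow (exp_pos _) hx1
  have hlarge : ∀ᶠ γ in cofinite, K * C < F γ := by
    obtain ⟨M, hM⟩ := exists_nat_gt (K * C)
    filter_upwards [hsum.tendsto_cofinite_zero.eventually
      (gt_mem_nhds (pow_pos (exp_pos (-(t / K))) M))] with γ hγ
    exact hM.trans (by exact_mod_cast (pow_lt_pow_iff_right_of_lt_one₀ (exp_pos _) hx1).mp hγ)
  refine (hsum.mul_left (exp (t * C))).of_norm_bounded_eventually ?_
  filter_upwards [hlarge] with γ hγ
  exact norm_rpow_neg_le_of_le_logp hK ht.le hγ (hlow γ)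

/-- If `log⁺ ∘ f` has a lower Fibonacci bound on `𝒜`, then `∑_{γ∈𝒜} f(γ)^{−t}` converges
for every `t > 0`. -/
theorem lower_fib_bound_summable (n : ℕ) (hn : 3 ≤ n)
    (F : AltGeo n → ℕ) (hF : IsFib n F)
    (f : AltGeo n → ℝ) (hf : ∀ γ, 0 < f γ)
    (K C : ℝ) (hK : 0 < K) (hC : 0 < C)
    (hlow : ∀ γ : AltGeo n, K⁻¹ * (F γ : ℝ) - C ≤ logp (f γ)) :
    ∀ t : ℝ, 0 < t → Summable fun γ : AltGeo n => f γ ^ (-t) :=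
  lower_fib_bound_summable_general n F hF f K C hK hlow

end MarkoffHurwitz
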